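/- arXiv:1709.07317 — 5 statements merged into one kernel-verified Lean document; each statement's English description precedes it below -/
import Mathlib

section
/- For a lattice Γ ⊆ ℝ^d, the set OS(Γ) = {R ∈ O(d,ℝ) : ∃ α > 0 with αRΓ ⊆ Γ} of similarity isometries is a subgroup of O(d,ℝ). -/
noncomputable section

abbrev Euc (d : ℕ) : Type := EuclideanSpace ℝ (Fin d)

/-- Γ is a (full-rank) lattice in ℝ^d: the ℤ-span of an ℝ-basis of ℝ^d. -/
def IsLattice {d : ℕ} (Γ : AddSubgroup (Euc d)) : Prop :=
  ∃ b : Module.Basis (Fin d) ℝ (Euc d),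
    Γ = (Submodule.span ℤ (Set.range ⇑b)).toAddSubgroup

/-- Two subgroups are commensurate if their intersection has finite index in both. -/
def Commensurate {d : ℕ} (Γ₁ Γ₂ : AddSubgroup (Euc d)) : Prop :=
  ((Γ₁ ⊓ Γ₂).addSubgroupOf Γ₁).FiniteIndex ∧ ((Γ₁ ⊓ Γ₂).addSubgroupOf Γ₂).FiniteIndex

/-- The image α·R(Γ) of Γ under the similarity transformation αR. -/
def simMap {d : ℕ} (α : ℝ) (R : Euc d ≃ₗᵢ[ℝ] Euc d) (Γ : AddSubgroup (Euc d)) :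
    AddSubgroup (Euc d) :=
  Γ.map (α • R.toLinearEquiv.toLinearMap).toAddMonoidHom

/-- The image R(Γ). -/
def rotMap {d : ℕ} (R : Euc d ≃ₗᵢ[ℝ] Euc d) (Γ : AddSubgroup (Euc d)) :
    AddSubgroup (Euc d) :=
  Γ.map R.toLinearEquiv.toLinearMap.toAddMonoidHom

/-- The set of similarity isometries of Γ. -/
def OSset {d : ℕ} (Γ : AddSubgroup (Euc d)) : Set (Euc d ≃ₗᵢ[ℝ] Euc d) :=
  {R | ∃ α : ℝ, 0 < α ∧ simMap α R Γ ≤ Γ}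

/-- The set of scaling factors of R, Scal_Γ(R) = {α : αRΓ ⊆ Γ}. -/
def Scal {d : ℕ} (Γ : AddSubgroup (Euc d)) (R : Euc d ≃ₗᵢ[ℝ] Euc d) : Set ℝ :=
  {α | simMap α R Γ ≤ Γ}

/-- δ is the denominator of R: the smallest positive element of Scal Γ R. -/
def IsDen {d : ℕ} (Γ : AddSubgroup (Euc d)) (R : Euc d ≃ₗᵢ[ℝ] Euc d) (δ : ℝ) : Prop :=
  0 < δ ∧ δ ∈ Scal Γ R ∧ ∀ β : ℝ, 0 < β → β ∈ Scal Γ R → δ ≤ β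

/-- The set of coincidence isometries of Γ. -/
def OCset {d : ℕ} (Γ : AddSubgroup (Euc d)) : Set (Euc d ≃ₗᵢ[ℝ] Euc d) :=
  {R | Commensurate Γ (rotMap R Γ)}

/-- The coincidence index Σ_Γ(R) = [Γ : Γ ∩ RΓ]. -/
def coinIndex {d : ℕ} (Γ : AddSubgroup (Euc d)) (R : Euc d ≃ₗᵢ[ℝ] Euc d) : ℕ :=
  (rotMap R Γ).relIndex Γ

/-- The coincidence site lattice Γ(R) = Γ ∩ RΓ. -/
def CSL {d : ℕ} (Γ : AddSubgroup (Euc d)) (R : Euc d ≃ₗᵢ[ℝ] Euc d) :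
    AddSubgroup (Euc d) :=
  Γ ⊓ rotMap R Γ

/-- The dual lattice Γ* = {x : ⟨x,y⟩ ∈ ℤ for all y ∈ Γ}. -/
def dualLattice {d : ℕ} (Γ : AddSubgroup (Euc d)) : AddSubgroup (Euc d) where
  carrier := {x | ∀ y ∈ Γ, ∃ n : ℤ, (inner ℝ x y : ℝ) = (n : ℝ)}
  zero_mem' := by
    intro y hy
    exact ⟨0, by simp⟩
  add_mem' := by
    intro a b ha hb y hy
    obtain ⟨n, hn⟩ := ha y hy
    obtain ⟨m, hm⟩ := hb y hy
    exact ⟨n + m, by rw [inner_add_left, hn, hm]; push_cast; ring⟩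
  neg_mem' := by
    intro a ha y hy
    obtain ⟨n, hn⟩ := ha y hy
    exact ⟨-n, by rw [inner_neg_left, hn]; push_cast; ring⟩

/-! If `α > 0` and `αRΓ ⊆ Γ`, then `αRΓ` is a sublattice of `Γ` of full rank, hence of some finite
index `n`, so `nΓ ⊆ αRΓ`, i.e. `(n/α)R⁻¹Γ ⊆ Γ`. Closure under products comes from
`(αβ)(RS) = (αR)(βS)`. -/

open Function

theorem Submodule.exists_nsmul_mem_map_of_injective {M : Type*} [AddCommGroup M]
    (L : Submodule ℤ M) [Module.Free ℤ L] [Module.Finite ℤ L] {f : M →ₗ[ℤ] M}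
    (hf : Injective f) (hfL : ∀ x ∈ L, f x ∈ L) :
    ∃ n : ℕ, n ≠ 0 ∧ ∀ x ∈ L, n • x ∈ L.map f := by
  set g : L →ₗ[ℤ] L := f.restrict hfL
  have hg : Injective g := fun x y hxy => Subtype.ext (hf (congrArg Subtype.val hxy))
  have : Finite (L ⧸ (LinearMap.range g).toAddSubgroup) :=
    Submodule.finiteQuotientOfFreeOfRankEq _ (LinearMap.finrank_range_of_inj hg)
  refine ⟨(LinearMap.range g).toAddSubgroup.index, AddSubgroup.index_ne_zero_of_finite,
    fun x hx => ?_⟩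
  obtain ⟨y, hy⟩ := (LinearMap.range g).toAddSubgroup.nsmul_index_mem ⟨x, hx⟩
  exact ⟨y, y.2, congrArg Subtype.val hy⟩

theorem IsLattice.exists_nsmul_mem_map_of_injective {d : ℕ} {Γ : AddSubgroup (Euc d)}
    (hΓ : IsLattice Γ) {f : Euc d →+ Euc d} (hf : Injective f) (hfΓ : Γ.map f ≤ Γ) :
    ∃ n : ℕ, n ≠ 0 ∧ ∀ x ∈ Γ, n • x ∈ Γ.map f := by
  obtain ⟨b, rfl⟩ := hΓ
  have := Module.Free.of_basis (b.restrictScalars ℤ)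
  have := Module.Finite.of_basis (b.restrictScalars ℤ)
  exact (Submodule.span ℤ (Set.range b)).exists_nsmul_mem_map_of_injective
    (f := f.toIntLinearMap) hf fun x hx => hfΓ ⟨x, hx, rfl⟩

section Scal

variable {d : ℕ} {Γ : AddSubgroup (Euc d)} {R S : Euc d ≃ₗᵢ[ℝ] Euc d} {α β : ℝ}

theorem mem_Scal_iff : α ∈ Scal Γ R ↔ ∀ x ∈ Γ, α • R x ∈ Γ :=
  ⟨fun h x hx => h ⟨x, hx, rfl⟩, by rintro h _ ⟨x, hx, rfl⟩; exact h x hx⟩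

theorem one_mem_Scal_one : (1 : ℝ) ∈ Scal Γ 1 :=
  mem_Scal_iff.2 fun x hx => by simpa using hx

theorem mul_mem_Scal_mul (hα : α ∈ Scal Γ R) (hβ : β ∈ Scal Γ S) :
    α * β ∈ Scal Γ (R * S) :=
  mem_Scal_iff.2 fun x hx => by
    have : (α * β) • (R * S) x = α • R (β • S x) := by
      rw [map_smul, smul_smul]; rfl
    exact this ▸ mem_Scal_iff.1 hα _ (mem_Scal_iff.1 hβ x hx)

theorem IsLattice.exists_pos_mem_Scal_inv (hΓ : IsLattice Γ) (hα₀ : 0 < α)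
    (hα : α ∈ Scal Γ R) : ∃ β, 0 < β ∧ β ∈ Scal Γ R⁻¹ := by
  have hf : Injective (α • R.toLinearEquiv.toLinearMap).toAddMonoidHom :=
    (smul_right_injective _ hα₀.ne').comp R.injective
  obtain ⟨n, hn, hnΓ⟩ := hΓ.exists_nsmul_mem_map_of_injective hf hα
  refine ⟨n / α, by positivity, mem_Scal_iff.2 fun x hx => ?_⟩
  obtain ⟨y, hy, hyx⟩ := hnΓ x hx
  have hyx' : α • R y = (n : ℝ) • x := by rw [Nat.cast_smul_eq_nsmul]; exact hyx
  have : (n / α) • R⁻¹ x = y := calc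
    (n / α) • R⁻¹ x = α⁻¹ • R.symm ((n : ℝ) • x) := by
      rw [map_smul, smul_smul, div_eq_inv_mul, LinearIsometryEquiv.inv_def]
    _ = y := by rw [← hyx', map_smul, R.symm_apply_apply, inv_smul_smul₀ hα₀.ne']
  exact this ▸ hy

end Scal

theorem OSset_isSubgroup {d : ℕ} (Γ : AddSubgroup (Euc d)) (hΓ : IsLattice Γ) :
    ∃ H : Subgroup (Euc d ≃ₗᵢ[ℝ] Euc d), (H : Set (Euc d ≃ₗᵢ[ℝ] Euc d)) = OSset Γ :=
  ⟨{ carrier := OSset Γ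
     one_mem' := ⟨1, one_pos, one_mem_Scal_one⟩
     mul_mem' := fun ⟨α, hα₀, hα⟩ ⟨β, hβ₀, hβ⟩ =>
       ⟨α * β, mul_pos hα₀ hβ₀, mul_mem_Scal_mul hα hβ⟩
     inv_mem' := fun ⟨_, hα₀, hα⟩ => hΓ.exists_pos_mem_Scal_inv hα₀ hα }, rfl⟩
end
end

section
/- Let Γ ⊆ ℝ^d be a lattice and R ∈ OS(Γ). Then den_Γ(R)^{d-1} is a positive integer multiple of den_Γ(R⁻¹); in particular den_Γ(R⁻¹) ≤ den_Γ(R)^{d-1}. -/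
noncomputable section

/-! If `αRΓ ⊆ Γ`, the matrix of `T = αR` in a basis of `Γ` is integral, hence so is its
adjugate `A`, and `T ∘ A = det T = ±α^d`. Thus `α^d Γ ⊆ αRΓ`, i.e. `α^(d-1) R⁻¹ Γ ⊆ Γ`, so
`δ^(d-1)` is a scaling factor of `R⁻¹`. The scaling factors of `R⁻¹` form a subgroup of `ℝ`,
which is generated by its least positive element `δ'`. -/

open Module Set

theorem LinearMap.det_smul_mem_range {R M : Type*} [CommRing R] [AddCommGroup M] [Module R M]
    [Module.Free R M] [Module.Finite R M] (f : M →ₗ[R] M) (x : M) :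
    LinearMap.det f • x ∈ LinearMap.range f := by
  classical
  let b := Module.Free.chooseBasis R M
  let g := Matrix.toLin b b (LinearMap.toMatrix b b f).adjugate
  have hfg : f ∘ₗ g = LinearMap.det f • LinearMap.id := by
    apply (LinearMap.toMatrix b b).injective
    rw [LinearMap.toMatrix_comp b b b, LinearMap.toMatrix_toLin, Matrix.mul_adjugate,
      LinearMap.det_toMatrix, map_smul, LinearMap.toMatrix_id]
  exact ⟨g x, by simpa using LinearMap.congr_fun hfg x⟩

section SpanRestrictScalars

variable {ι R S M : Type*} [Fintype ι] [DecidableEq ι] [CommRing R] [IsDomain R] [CommRing S]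
  [Nontrivial S] [Algebra R S] [IsTorsionFree R S] [AddCommGroup M] [Module R M] [Module S M]
  [IsScalarTower R S M] (b : Basis ι S M)

theorem Module.Basis.algebraMap_det_restrict_span (T : M →ₗ[S] M)
    (hT : ∀ x ∈ Submodule.span R (range b), T x ∈ Submodule.span R (range b)) :
    algebraMap R S (LinearMap.det ((T.restrictScalars R).restrict hT)) = LinearMap.det T := by
  let bR := b.restrictScalars R
  have hmat : (LinearMap.toMatrix bR bR ((T.restrictScalars R).restrict hT)).map (algebraMap R S)
      = LinearMap.toMatrix b b T := by
    ext i j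
    rw [Matrix.map_apply, LinearMap.toMatrix_apply, LinearMap.toMatrix_apply,
      Basis.restrictScalars_repr_apply]
    exact congrArg (b.repr · i) (congrArg T (b.restrictScalars_apply R j))
  rw [← LinearMap.det_toMatrix bR, ← LinearMap.det_toMatrix b, ← hmat, RingHom.map_det]
  rfl

theorem Module.Basis.det_smul_mem_map_span (T : M →ₗ[S] M)
    (hT : ∀ x ∈ Submodule.span R (range b), T x ∈ Submodule.span R (range b))
    {x : M} (hx : x ∈ Submodule.span R (range b)) :
    LinearMap.det T • x ∈ (Submodule.span R (range b)).map (T.restrictScalars R) := by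
  have : Module.Free R (Submodule.span R (range b)) := .of_basis (b.restrictScalars R)
  have : Module.Finite R (Submodule.span R (range b)) := .of_basis (b.restrictScalars R)
  obtain ⟨y, hy⟩ := LinearMap.det_smul_mem_range ((T.restrictScalars R).restrict hT) ⟨x, hx⟩
  refine ⟨y, y.2, ?_⟩
  rw [← b.algebraMap_det_restrict_span T hT, algebraMap_smul]
  exact congrArg Subtype.val hy

end SpanRestrictScalars

theorem LinearIsometryEquiv.abs_det {E : Type*} [NormedAddCommGroup E] [InnerProductSpace ℝ E]
    [FiniteDimensional ℝ E] (R : E ≃ₗᵢ[ℝ] E) : |LinearMap.det R.toLinearEquiv.toLinearMap| = 1 := by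
  rw [← LinearMap.normDet_eq_abs_det]
  exact R.toLinearIsometry.normDet_eq_one

theorem mem_scal_iff {d : ℕ} {Γ : AddSubgroup (Euc d)} {R : Euc d ≃ₗᵢ[ℝ] Euc d} {α : ℝ} :
    α ∈ Scal Γ R ↔ ∀ x ∈ Γ, α • R x ∈ Γ := by
  simp [Scal, simMap, SetLike.le_def]

theorem abs_pow_smul_mem_simMap {d : ℕ} {Γ : AddSubgroup (Euc d)} (hΓ : IsLattice Γ)
    {R : Euc d ≃ₗᵢ[ℝ] Euc d} {α : ℝ} (hα : α ∈ Scal Γ R) {x : Euc d} (hx : x ∈ Γ) :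
    |α| ^ d • x ∈ simMap α R Γ := by
  obtain ⟨b, rfl⟩ := hΓ
  set T : Euc d →ₗ[ℝ] Euc d := α • R.toLinearEquiv.toLinearMap
  have hT : ∀ y ∈ Submodule.span ℤ (range b), T y ∈ Submodule.span ℤ (range b) :=
    fun y hy => mem_scal_iff.mp hα y hy
  have hdet : |LinearMap.det T| = |α| ^ d := by
    rw [LinearMap.det_smul, abs_mul, abs_pow, R.abs_det, finrank_euclideanSpace_fin, mul_one]
  obtain ⟨y, hy, hTy⟩ := b.det_smul_mem_map_span T hT hx
  rcases abs_choice (LinearMap.det T) with h | h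
  · exact ⟨y, hy, by rw [← hdet, h, ← hTy]; rfl⟩
  · exact ⟨-y, neg_mem hy, by rw [← hdet, h, neg_smul, ← hTy, map_neg]; rfl⟩

theorem pow_pred_mem_scal_inv {d : ℕ} {Γ : AddSubgroup (Euc d)} (hΓ : IsLattice Γ)
    {R : Euc d ≃ₗᵢ[ℝ] Euc d} {α : ℝ} (hpos : 0 < α) (hα : α ∈ Scal Γ R) :
    α ^ (d - 1) ∈ Scal Γ R⁻¹ := by
  rw [mem_scal_iff]
  intro x hx
  rcases Nat.eq_zero_or_pos d with rfl | hd
  · rwa [Subsingleton.elim (α ^ (0 - 1) • R⁻¹ x) x]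
  obtain ⟨y, hy, hRy⟩ := abs_pow_smul_mem_simMap hΓ hα hx
  rw [abs_of_pos hpos] at hRy
  have hRy' : R y = α ^ (d - 1) • x := by
    apply smul_right_injective _ hpos.ne'
    dsimp only
    rw [smul_smul, ← pow_succ', Nat.sub_add_cancel hd]
    exact hRy
  have hy_eq : α ^ (d - 1) • R⁻¹ x = y := by
    rw [← map_smul, ← hRy']
    exact R.symm_apply_apply y
  exact hy_eq ▸ hy

def scalSubgroup {d : ℕ} (Γ : AddSubgroup (Euc d)) (R : Euc d ≃ₗᵢ[ℝ] Euc d) : AddSubgroup ℝ where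
  carrier := Scal Γ R
  zero_mem' := mem_scal_iff.mpr fun _ _ => by simp
  add_mem' ha hb := mem_scal_iff.mpr fun x hx => by
    rw [add_smul]
    exact add_mem (mem_scal_iff.mp ha x hx) (mem_scal_iff.mp hb x hx)
  neg_mem' ha := mem_scal_iff.mpr fun x hx => by
    rw [neg_smul]
    exact neg_mem (mem_scal_iff.mp ha x hx)

theorem IsDen.isLeast {d : ℕ} {Γ : AddSubgroup (Euc d)} {R : Euc d ≃ₗᵢ[ℝ] Euc d} {δ : ℝ}
    (h : IsDen Γ R δ) : IsLeast {g | g ∈ scalSubgroup Γ R ∧ 0 < g} δ :=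
  ⟨⟨h.2.1, h.1⟩, fun β hβ => h.2.2 β hβ.2 hβ.1⟩

theorem AddSubgroup.exists_pos_nsmul_eq_of_isLeast {G : Type*} [AddCommGroup G] [LinearOrder G]
    [IsOrderedAddMonoid G] [Archimedean G] {H : AddSubgroup G} {a g : G}
    (ha : IsLeast {g | g ∈ H ∧ 0 < g} a) (hg : g ∈ H) (hg_pos : 0 < g) :
    ∃ n : ℕ, 0 < n ∧ g = n • a := by
  rw [AddSubgroup.cyclic_of_min ha, AddSubgroup.mem_closure_singleton] at hg
  obtain ⟨k, rfl⟩ := hg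
  have hk : 0 < k := (zsmul_lt_zsmul_iff_left ha.1.2).mp (by rwa [zero_zsmul])
  exact ⟨k.toNat, by omega, by rw [← natCast_zsmul, Int.toNat_of_nonneg hk.le]⟩

theorem den_inv_divides_den_pow {d : ℕ} (Γ : AddSubgroup (Euc d)) (hΓ : IsLattice Γ)
    (R : Euc d ≃ₗᵢ[ℝ] Euc d) (δ δ' : ℝ)
    (hδ : IsDen Γ R δ) (hδ' : IsDen Γ R⁻¹ δ') :
    (∃ n : ℕ, 0 < n ∧ δ ^ (d - 1) = (n : ℝ) * δ') ∧ δ' ≤ δ ^ (d - 1) := by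
  have hmem : δ ^ (d - 1) ∈ Scal Γ R⁻¹ := pow_pred_mem_scal_inv hΓ hδ.1 hδ.2.1
  have hpos : 0 < δ ^ (d - 1) := pow_pos hδ.1 _
  obtain ⟨n, hn, hdiv⟩ := AddSubgroup.exists_pos_nsmul_eq_of_isLeast hδ'.isLeast hmem hpos
  exact ⟨⟨n, hn, by rw [hdiv, nsmul_eq_mul]⟩, hδ'.2.2 _ hpos hmem⟩
end
end

section
/- Let Γ ⊆ ℝ^d be a lattice. The set OC(Γ) = {R ∈ O(d,ℝ) : Γ and RΓ are commensurate} is a subgroup of O(d,ℝ). -/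
noncomputable section

/-! Commensurability is an equivalence relation on additive subgroups, and it is preserved by
additive automorphisms since these preserve relative indices. Hence, for any group acting
additively on `A`, the elements `g` with `H` commensurable to `g • H` form a subgroup, and
`OC(Γ)` is the preimage of that subgroup of `GL(ℝ^d)` under `O(d) → GL(ℝ^d)`. -/

open scoped Pointwise

namespace AddSubgroup

variable {M A : Type*} [Group M] [AddGroup A] [DistribMulAction M A]

theorem Commensurable.pointwise_smul {H K : AddSubgroup A} (h : Commensurable H K) (g : M) :
    Commensurable (g • H) (g • K) := by
  have hg : Function.Injective (DistribMulAction.toAddMonoidEnd M A g) := MulAction.injective g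
  simpa only [Commensurable, pointwise_smul_def, relIndex_map_map_of_injective _ _ hg] using h

variable (M) in
def commensurator (H : AddSubgroup A) : Subgroup M where
  carrier := {g | Commensurable H (g • H)}
  one_mem' := by simpa using Commensurable.refl H
  mul_mem' {g h} hg hh := by
    simpa only [Set.mem_ofPred_eq, mul_smul] using hg.trans (hh.pointwise_smul g)
  inv_mem' {g} hg := by
    simpa only [Set.mem_ofPred_eq, inv_smul_smul] using (hg.pointwise_smul g⁻¹).symm

theorem mem_commensurator_iff {H : AddSubgroup A} {g : M} :
    g ∈ commensurator M H ↔ Commensurable H (g • H) :=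
  Iff.rfl

end AddSubgroup

def LinearIsometryEquiv.toLinearEquivHom (R E : Type*) [Semiring R] [SeminormedAddCommGroup E]
    [Module R E] : (E ≃ₗᵢ[R] E) →* (E ≃ₗ[R] E) where
  toFun f := f.toLinearEquiv
  map_one' := rfl
  map_mul' _ _ := rfl

theorem commensurate_iff_commensurable {d : ℕ} (Γ₁ Γ₂ : AddSubgroup (Euc d)) :
    Commensurate Γ₁ Γ₂ ↔ Γ₁.Commensurable Γ₂ := by
  rw [Commensurate, AddSubgroup.inf_addSubgroupOf_left, AddSubgroup.inf_addSubgroupOf_right,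
    AddSubgroup.finiteIndex_iff, AddSubgroup.finiteIndex_iff, AddSubgroup.Commensurable, and_comm]
  rfl

theorem rotMap_eq_smul {d : ℕ} (R : Euc d ≃ₗᵢ[ℝ] Euc d) (Γ : AddSubgroup (Euc d)) :
    rotMap R Γ = LinearIsometryEquiv.toLinearEquivHom ℝ (Euc d) R • Γ :=
  rfl

theorem OCset_isSubgroup_general {d : ℕ} (Γ : AddSubgroup (Euc d)) :
    ∃ H : Subgroup (Euc d ≃ₗᵢ[ℝ] Euc d), (H : Set (Euc d ≃ₗᵢ[ℝ] Euc d)) = OCset Γ := by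
  refine ⟨(Γ.commensurator (Euc d ≃ₗ[ℝ] Euc d)).comap
    (LinearIsometryEquiv.toLinearEquivHom ℝ (Euc d)), ?_⟩
  ext R
  simp only [SetLike.mem_coe, Subgroup.mem_comap, AddSubgroup.mem_commensurator_iff, OCset,
    Set.mem_ofPred_eq, commensurate_iff_commensurable, rotMap_eq_smul]

theorem OCset_isSubgroup {d : ℕ} (Γ : AddSubgroup (Euc d)) (hΓ : IsLattice Γ) :
    ∃ H : Subgroup (Euc d ≃ₗᵢ[ℝ] Euc d), (H : Set (Euc d ≃ₗᵢ[ℝ] Euc d)) = OCset Γ :=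
  OCset_isSubgroup_general Γ
end
end

section
/- For any lattice Γ ⊆ ℝ^d and R₁, R₂ ∈ OC(Γ): (1) Σ_Γ(R₁R₂) divides Σ_Γ(R₁)·Σ_Γ(R₂); (2) if Σ_Γ(R₁) and Σ_Γ(R₂) are coprime, then Σ_Γ(R₁R₂) = Σ_Γ(R₁)·Σ_Γ(R₂). -/
noncomputable section

/-!
Part (1) is group theory: for subgroups `A`, `B` and a normal subgroup `C`, the index
`[A : A ∩ C]` divides `[B : B ∩ C] · [A : A ∩ B]`. Take `A = Γ`, `B = R₁Γ`, `C = R₁R₂Γ`;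
transporting by `R₁` gives `[R₁Γ : R₁Γ ∩ R₁R₂Γ] = Σ(R₂)`.

Part (2) follows from `Σ(R⁻¹) = Σ(R)`: applying (1) to `(R₁R₂)R₂⁻¹` and `R₁⁻¹(R₁R₂)` shows
`Σ(R₁) ∣ Σ(R₁R₂) Σ(R₂)` and `Σ(R₂) ∣ Σ(R₁) Σ(R₁R₂)`, so coprimality gives
`Σ(R₁) Σ(R₂) ∣ Σ(R₁R₂)`. Moreover `Σ(R⁻¹) = [RΓ : Γ ∩ RΓ]`, which equals `[Γ : Γ ∩ RΓ]` because
`covol(Γ ∩ RΓ)` is both `[Γ : Γ ∩ RΓ] · covol Γ` and `[RΓ : Γ ∩ RΓ] · covol RΓ`, while the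
isometry `R` preserves covolume.
-/

theorem AddSubgroup.relIndex_dvd_relIndex_mul_relIndex {G : Type*} [AddGroup G]
    (A B C : AddSubgroup G) [C.Normal] : C.relIndex A ∣ C.relIndex B * B.relIndex A := by
  have hB : C.relIndex (B ⊓ A) ∣ C.relIndex B := by
    rw [← relIndex_addSubgroupOf inf_le_left]
    exact relIndex_dvd_index_of_normal _ _
  calc C.relIndex A ∣ (C ⊓ B).relIndex A := relIndex_dvd_of_le_left A inf_le_left
    _ = C.relIndex (B ⊓ A) * B.relIndex A := (relIndex_inf_mul_relIndex C B A).symm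
    _ ∣ C.relIndex B * B.relIndex A := mul_dvd_mul_right hB _

theorem Nat.eq_mul_of_coprime_of_dvd_mul {a b c : ℕ} (hab : a.Coprime b) (hc : c ∣ a * b)
    (ha : a ∣ c * b) (hb : b ∣ a * c) : c = a * b :=
  Nat.dvd_antisymm hc (hab.mul_dvd_of_dvd_of_dvd (hab.dvd_of_dvd_mul_right ha)
    (hab.symm.dvd_of_dvd_mul_left hb))

namespace ZLattice

theorem isZLattice_of_relIndex_ne_zero {K E : Type*} [NormedField K] [CharZero K]
    [NormedAddCommGroup E] [NormedSpace K E] {L L' : Submodule ℤ E} [DiscreteTopology L]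
    [IsZLattice K L] [DiscreteTopology L'] (h : L'.toAddSubgroup.relIndex L.toAddSubgroup ≠ 0) :
    IsZLattice K L' := by
  refine ⟨eq_top_iff.mpr ?_⟩
  rw [← IsZLattice.span_top (K := K) (L := L), Submodule.span_le]
  intro x hx
  set n := L'.toAddSubgroup.relIndex L.toAddSubgroup
  have hnx : n • x ∈ L' := L'.toAddSubgroup.nsmul_relIndex_mem (K := L.toAddSubgroup) hx
  have hn : (n : K) ≠ 0 := Nat.cast_ne_zero.mpr h
  have hx_eq : x = (n : K)⁻¹ • (n • x) := by
    rw [← Nat.cast_smul_eq_nsmul K, smul_smul, inv_mul_cancel₀ hn, one_smul]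
  rw [hx_eq]
  exact Submodule.smul_mem _ _ (Submodule.subset_span hnx)

variable {E : Type*} [NormedAddCommGroup E] [InnerProductSpace ℝ E] [FiniteDimensional ℝ E]
  [MeasurableSpace E] [BorelSpace E]

theorem relIndex_comm_of_covolume_eq (L₁ L₂ : Submodule ℤ E) [DiscreteTopology L₁]
    [IsZLattice ℝ L₁] [DiscreteTopology L₂] [IsZLattice ℝ L₂]
    (hcov : covolume L₁ = covolume L₂) (h : L₂.toAddSubgroup.relIndex L₁.toAddSubgroup ≠ 0) :
    L₂.toAddSubgroup.relIndex L₁.toAddSubgroup = L₁.toAddSubgroup.relIndex L₂.toAddSubgroup := by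
  have hinf : (L₁ ⊓ L₂).toAddSubgroup = L₁.toAddSubgroup ⊓ L₂.toAddSubgroup := rfl
  have : DiscreteTopology ↥(L₁ ⊓ L₂) :=
    DiscreteTopology.of_subset (inferInstanceAs (DiscreteTopology (L₁ : Set E))) inf_le_left
  have : IsZLattice ℝ (L₁ ⊓ L₂) := isZLattice_of_relIndex_ne_zero (K := ℝ) (L := L₁)
    (by rwa [hinf, AddSubgroup.inf_relIndex_left])
  have h₁ := covolume_div_covolume_eq_relIndex' (L₁ ⊓ L₂) L₁ inf_le_left
  have h₂ := covolume_div_covolume_eq_relIndex' (L₁ ⊓ L₂) L₂ inf_le_right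
  rw [hcov, h₂, Nat.cast_inj, hinf, AddSubgroup.inf_relIndex_left,
    AddSubgroup.inf_relIndex_right] at h₁
  exact h₁.symm

open MeasureTheory in
theorem covolume_comap_linearIsometryEquiv (L : Submodule ℤ E) [DiscreteTopology L]
    [IsZLattice ℝ L] (e : E ≃ₗᵢ[ℝ] E) :
    covolume (ZLattice.comap ℝ L e.toContinuousLinearEquiv.toLinearMap) = covolume L :=
  covolume_comap L volume volume e.measurePreserving

end ZLattice

section CoincidenceIndex

variable {d : ℕ}

theorem rotMap_eq_comap (R : Euc d ≃ₗᵢ[ℝ] Euc d) (Γ : AddSubgroup (Euc d)) :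
    rotMap R Γ = Γ.comap R⁻¹.toLinearEquiv.toLinearMap.toAddMonoidHom := by
  ext x
  exact ⟨by rintro ⟨y, hy, rfl⟩; simpa using hy, fun hx => ⟨R⁻¹ x, hx, by simp⟩⟩

theorem rotMap_mul (R₁ R₂ : Euc d ≃ₗᵢ[ℝ] Euc d) (Γ : AddSubgroup (Euc d)) :
    rotMap (R₁ * R₂) Γ = rotMap R₁ (rotMap R₂ Γ) := by
  rw [rotMap, rotMap, rotMap, AddSubgroup.map_map]
  rfl

theorem relIndex_rotMap_rotMap (R : Euc d ≃ₗᵢ[ℝ] Euc d) (A B : AddSubgroup (Euc d)) :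
    (rotMap R A).relIndex (rotMap R B) = A.relIndex B :=
  AddSubgroup.relIndex_map_map_of_injective A B R.injective

theorem coinIndex_ne_zero {Γ : AddSubgroup (Euc d)} {R : Euc d ≃ₗᵢ[ℝ] Euc d}
    (hR : R ∈ OCset Γ) : coinIndex Γ R ≠ 0 := by
  rw [coinIndex, ← AddSubgroup.inf_relIndex_left]
  exact hR.1.index_ne_zero

theorem coinIndex_mul_dvd (Γ : AddSubgroup (Euc d)) (R₁ R₂ : Euc d ≃ₗᵢ[ℝ] Euc d) :
    coinIndex Γ (R₁ * R₂) ∣ coinIndex Γ R₁ * coinIndex Γ R₂ := by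
  have h := AddSubgroup.relIndex_dvd_relIndex_mul_relIndex Γ (rotMap R₁ Γ) (rotMap (R₁ * R₂) Γ)
  rw [rotMap_mul, relIndex_rotMap_rotMap] at h
  rw [coinIndex, coinIndex, coinIndex, rotMap_mul, mul_comm]
  exact h

theorem relIndex_rotMap_comm {Γ : AddSubgroup (Euc d)} (hΓ : IsLattice Γ)
    {R : Euc d ≃ₗᵢ[ℝ] Euc d} (hR : R ∈ OCset Γ) :
    (rotMap R Γ).relIndex Γ = Γ.relIndex (rotMap R Γ) := by
  obtain ⟨b, rfl⟩ := hΓ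
  have hfin := coinIndex_ne_zero hR
  rw [coinIndex, rotMap_eq_comap] at hfin
  rw [rotMap_eq_comap]
  exact ZLattice.relIndex_comm_of_covolume_eq _
    (ZLattice.comap ℝ _ R⁻¹.toContinuousLinearEquiv.toLinearMap)
    (ZLattice.covolume_comap_linearIsometryEquiv _ _).symm hfin

theorem coinIndex_inv {Γ : AddSubgroup (Euc d)} (hΓ : IsLattice Γ) {R : Euc d ≃ₗᵢ[ℝ] Euc d}
    (hR : R ∈ OCset Γ) : coinIndex Γ R⁻¹ = coinIndex Γ R := by
  rw [coinIndex, coinIndex, relIndex_rotMap_comm hΓ hR, rotMap_eq_comap, inv_inv,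
    AddSubgroup.relIndex_comap, rotMap]

end CoincidenceIndex

theorem coinIndex_mul {d : ℕ} (Γ : AddSubgroup (Euc d)) (hΓ : IsLattice Γ)
    (R₁ R₂ : Euc d ≃ₗᵢ[ℝ] Euc d) (hR₁ : R₁ ∈ OCset Γ) (hR₂ : R₂ ∈ OCset Γ) :
    coinIndex Γ (R₁ * R₂) ∣ coinIndex Γ R₁ * coinIndex Γ R₂ ∧
    (Nat.Coprime (coinIndex Γ R₁) (coinIndex Γ R₂) →
      coinIndex Γ (R₁ * R₂) = coinIndex Γ R₁ * coinIndex Γ R₂) := by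
  refine ⟨coinIndex_mul_dvd Γ R₁ R₂, fun hcop => ?_⟩
  have hdvd₁ := coinIndex_mul_dvd Γ (R₁ * R₂) R₂⁻¹
  have hdvd₂ := coinIndex_mul_dvd Γ R₁⁻¹ (R₁ * R₂)
  rw [mul_inv_cancel_right, coinIndex_inv hΓ hR₂] at hdvd₁
  rw [inv_mul_cancel_left, coinIndex_inv hΓ hR₁] at hdvd₂
  exact Nat.eq_mul_of_coprime_of_dvd_mul hcop (coinIndex_mul_dvd Γ R₁ R₂) hdvd₁ hdvd₂
end
end

section
/- Let Λ be a sublattice of Γ ⊆ ℝ^d of index m and let R be a coincidence isometry. Then Σ_Λ(R) divides m·Σ_Γ(R) and Σ_Γ(R) divides m·Σ_Λ(R). -/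
noncomputable section

/-!
Index arithmetic for the nested pairs `Λ ≤ Γ` and `RΛ ≤ RΓ`, where `[RΓ : RΛ] = [Γ : Λ] = m`.
`Σ_Γ(R) ∣ m Σ_Λ(R)`: the group `Γ ∩ RΓ` contains `Λ ∩ RΛ`, whose index in `Γ` is
`[Γ : Λ] [Λ : Λ ∩ RΛ]`. `Σ_Λ(R) ∣ m Σ_Γ(R)`: split
`[Λ : Λ ∩ RΛ] = [Λ ∩ RΓ : Λ ∩ RΛ] [Λ : Λ ∩ RΓ]`; since the groups are abelian, the two factors
divide the same indices taken over the larger groups, `[RΓ : RΛ]` and `[Γ : Γ ∩ RΓ]`.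
-/

namespace AddSubgroup

variable {G : Type*} [AddGroup G]

theorem relIndex_dvd_of_le_right (H : AddSubgroup G) [H.Normal] {K L : AddSubgroup G}
    (hKL : K ≤ L) :
    H.relIndex K ∣ H.relIndex L := by
  rw [← relIndex_addSubgroupOf hKL]
  exact relIndex_dvd_index_of_normal _ _

theorem relIndex_dvd_relIndex_mul_relIndex_of_normal {Λ Γ Λ' Γ' : AddSubgroup G}
    [Λ'.Normal] [Γ'.Normal] (hΛΓ : Λ ≤ Γ) (hΛΓ' : Λ' ≤ Γ') :
    Λ'.relIndex Λ ∣ Λ'.relIndex Γ' * Γ'.relIndex Γ := by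
  rw [← inf_of_le_left hΛΓ', ← relIndex_inf_mul_relIndex, inf_of_le_left hΛΓ']
  exact mul_dvd_mul (Λ'.relIndex_dvd_of_le_right inf_le_left)
    (Γ'.relIndex_dvd_of_le_right hΛΓ)

theorem relIndex_dvd_relIndex_mul_relIndex_of_le {Λ Γ Λ' Γ' : AddSubgroup G}
    (hΛΓ : Λ ≤ Γ) (hΛΓ' : Λ' ≤ Γ') :
    Γ'.relIndex Γ ∣ Λ.relIndex Γ * Λ'.relIndex Λ := by
  have hsplit : Λ'.relIndex Λ * Λ.relIndex Γ = (Λ' ⊓ Λ).relIndex Γ := by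
    rw [← relIndex_inf_mul_relIndex, inf_of_le_left hΛΓ]
  rw [mul_comm, hsplit]
  exact relIndex_dvd_of_le_left Γ (inf_le_left.trans hΛΓ')

end AddSubgroup

theorem coinIndex_sublattice_general {d : ℕ} (Γ Λ : AddSubgroup (Euc d))
    (hsub : Λ ≤ Γ)
    (m : ℕ) (hm : Λ.relIndex Γ = m)
    (R : Euc d ≃ₗᵢ[ℝ] Euc d) :
    coinIndex Λ R ∣ m * coinIndex Γ R ∧ coinIndex Γ R ∣ m * coinIndex Λ R := by
  have hrot : (rotMap R Λ).relIndex (rotMap R Γ) = m :=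
    hm ▸ AddSubgroup.relIndex_map_map_of_injective Λ Γ R.injective
  constructor
  · rw [← hrot]
    exact AddSubgroup.relIndex_dvd_relIndex_mul_relIndex_of_normal hsub
      (AddSubgroup.map_mono hsub)
  · rw [← hm]
    exact AddSubgroup.relIndex_dvd_relIndex_mul_relIndex_of_le hsub
      (AddSubgroup.map_mono hsub)

theorem coinIndex_sublattice {d : ℕ} (Γ Λ : AddSubgroup (Euc d))
    (hΓ : IsLattice Γ) (hΛ : IsLattice Λ) (hsub : Λ ≤ Γ)
    (m : ℕ) (hm : Λ.relIndex Γ = m) (hm0 : 0 < m)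
    (R : Euc d ≃ₗᵢ[ℝ] Euc d) (hR : R ∈ OCset Γ) :
    coinIndex Λ R ∣ m * coinIndex Γ R ∧ coinIndex Γ R ∣ m * coinIndex Λ R :=
  coinIndex_sublattice_general Γ Λ hsub m hm R
end
end
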